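/- arXiv:math/0508301 — 2 statements merged into one kernel-verified Lean document; each statement's English description precedes it below -/
import Mathlib

section
/- Let G be a locally compact group admitting a continuous positive definite function σ with σ(e) = 1 such that σ(x) ≠ 1 for all x ≠ e (σ is adapted). Then G is first countable. -/
/-!
Adaptedness says that the fibre of `σ` over `σ e` is `{e}`. On a compact neighbourhood `K` of `e`
this makes `σ` separate `e` from every compact `K \ V`, `V` an open neighbourhood of `e`, so the
sets `K ∩ σ⁻¹(B(1, 1/n))` form a countable neighbourhood base at `e`; translations carry it to
every point of `G`.
-/

open Topology Filter

theorem nhds_eq_principal_inf_comap_nhds_of_preimage_singleton {X Y : Type*}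
    [TopologicalSpace X] [TopologicalSpace Y] [T2Space Y] {f : X → Y} (hf : Continuous f)
    {x : X} (hx : f ⁻¹' {f x} = {x}) {K : Set X} (hKc : IsCompact K) (hK : K ∈ 𝓝 x) :
    𝓝 x = 𝓟 K ⊓ comap f (𝓝 (f x)) := by
  refine le_antisymm (le_inf (le_principal_iff.mpr hK) hf.continuousAt.tendsto.le_comap) ?_
  intro t ht
  obtain ⟨V, hVt, hVo, hxV⟩ := mem_nhds_iff.mp ht
  have hfx : f x ∉ f '' (K \ V) := by
    rintro ⟨y, ⟨-, hyV⟩, hy⟩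
    obtain rfl : y = x := hx.subset hy
    exact hyV hxV
  have hW : (f '' (K \ V))ᶜ ∈ 𝓝 (f x) :=
    ((hKc.diff hVo).image hf).isClosed.isOpen_compl.mem_nhds hfx
  exact mem_inf_of_inter (mem_principal_self K) (preimage_mem_comap hW) fun y ⟨hyK, hyW⟩ =>
    hVt (by_contra fun hyV => hyW ⟨y, ⟨hyK, hyV⟩, rfl⟩)

theorem isCountablyGenerated_nhds_of_preimage_singleton {X Y : Type*}
    [TopologicalSpace X] [WeaklyLocallyCompactSpace X] [TopologicalSpace Y] [T2Space Y]
    [FirstCountableTopology Y] {f : X → Y} (hf : Continuous f) {x : X}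
    (hx : f ⁻¹' {f x} = {x}) : (𝓝 x).IsCountablyGenerated := by
  obtain ⟨K, hKc, hK⟩ := exists_compact_mem_nhds x
  rw [nhds_eq_principal_inf_comap_nhds_of_preimage_singleton hf hx hKc hK]
  infer_instance

theorem IsTopologicalGroup.firstCountableTopology_of_isCountablyGenerated_nhds_one
    {G : Type*} [Group G] [TopologicalSpace G] [IsTopologicalGroup G]
    [(𝓝 (1 : G)).IsCountablyGenerated] : FirstCountableTopology G where
  nhds_generated_countable a := by
    rw [← map_mul_left_nhds_one a]
    infer_instance

theorem stmt_6_general {G : Type*} [Group G] [TopologicalSpace G] [IsTopologicalGroup G]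
    [LocallyCompactSpace G]
    (σ : G → ℂ) (hc : Continuous σ)
    (he : σ 1 = 1) (hadapted : ∀ x : G, x ≠ 1 → σ x ≠ 1) :
    FirstCountableTopology G := by
  have hfibre : σ ⁻¹' {σ 1} = {1} := by
    ext x
    simp only [Set.mem_preimage, Set.mem_singleton_iff, he]
    exact ⟨not_imp_not.mp (hadapted x), fun hx => hx ▸ he⟩
  have := isCountablyGenerated_nhds_of_preimage_singleton hc hfibre
  exact IsTopologicalGroup.firstCountableTopology_of_isCountablyGenerated_nhds_one

/-- A locally compact (Hausdorff) group admitting an adapted continuous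
function `σ` with `|σ| ≤ 1 = σ(e)` and `σ(x) ≠ 1` for `x ≠ e` is first countable. -/
theorem stmt_6 {G : Type*} [Group G] [TopologicalSpace G] [IsTopologicalGroup G]
    [LocallyCompactSpace G] [T2Space G]
    (σ : G → ℂ) (hc : Continuous σ) (hb : ∀ x, ‖σ x‖ ≤ 1)
    (he : σ 1 = 1) (hadapted : ∀ x : G, x ≠ 1 → σ x ≠ 1) :
    FirstCountableTopology G :=
  stmt_6_general σ hc he hadapted
end

section
/- Let H be a Hilbert space, π a unitary representation of a group G on H, and let C be a nonempty, convex, weakly compact subset of H such that π(y)C ⊆ C for all y in a subgroup S of G. Then there exists η ∈ C with π(y)η = η for all y ∈ S. (In particular, applying this with C the set of vectors η with ‖η‖ ≤ ‖η₀‖ representing a fixed coefficient function, every left-S-invariant matrix coefficient σ(x) = ⟨π(x)ξ, η₀⟩ can be represented as σ(x) = ⟨π(x)ξ, η⟩ with η an S-fixed vector.) -/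
open scoped InnerProductSpace

lemma weakT2 {H : Type*} [NormedAddCommGroup H] [InnerProductSpace ℂ H] :
    T2Space (WeakSpace ℂ H) := by
  refine (t2Space_iff _).2 fun {x y} hxy => ?_
  obtain ⟨f, hf⟩ := SeparatingDual.exists_separating_of_ne (R := ℂ)
    (show (toWeakSpace ℂ H).symm x ≠ (toWeakSpace ℂ H).symm y from
      fun h => hxy ((toWeakSpace ℂ H).symm.injective h))
  have hc : Continuous fun w : WeakSpace ℂ H => f ((toWeakSpace ℂ H).symm w) :=
    WeakBilin.eval_continuous (topDualPairing ℂ H).flip f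
  exact separated_by_continuous hc hf

lemma closed_of_wc {H : Type*} [NormedAddCommGroup H] [InnerProductSpace ℂ H]
    {C : Set H} (hwc : IsCompact (toWeakSpace ℂ H '' C)) : IsClosed C := by
  have := weakT2 (H := H)
  have h1 : IsClosed (toWeakSpace ℂ H '' C) := hwc.isClosed
  have h2 : C = toWeakSpaceCLM ℂ H ⁻¹' (toWeakSpace ℂ H '' C) := by
    ext x
    simp only [Set.mem_preimage]
    constructor
    · intro hx; exact ⟨x, hx, rfl⟩
    · rintro ⟨y, hy, hxy⟩
      rwa [← (toWeakSpace ℂ H).injective hxy]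
  rw [h2]
  exact h1.preimage (toWeakSpaceCLM ℂ H).continuous

lemma bounded_of_wc {H : Type*} [NormedAddCommGroup H] [InnerProductSpace ℂ H] [CompleteSpace H]
    {C : Set H} (hwc : IsCompact (toWeakSpace ℂ H '' C)) : ∃ M, ∀ c ∈ C, ‖c‖ ≤ M := by
  have hpt : ∀ x : H, ∃ M, ∀ c : C, ‖innerSL ℂ (c : H) x‖ ≤ M := by
    intro x
    have hc : Continuous fun w : WeakSpace ℂ H => innerSL ℂ x ((toWeakSpace ℂ H).symm w) :=
      WeakBilin.eval_continuous (topDualPairing ℂ H).flip (innerSL ℂ x)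
    have hcpt : IsCompact ((fun w : WeakSpace ℂ H => innerSL ℂ x ((toWeakSpace ℂ H).symm w)) ''
        (toWeakSpace ℂ H '' C)) := hwc.image hc
    obtain ⟨M, hM⟩ := hcpt.isBounded.exists_norm_le
    refine ⟨M, fun c => ?_⟩
    have : ‖innerSL ℂ x (c : H)‖ ≤ M := hM _ ⟨_, ⟨c, c.2, rfl⟩, by simp⟩
    rw [innerSL_apply_apply]; rwa [norm_inner_symm]
  obtain ⟨M, hM⟩ := banach_steinhaus (g := fun c : C => innerSL ℂ (c : H)) hpt
  exact ⟨M, fun c hc => by simpa [innerSL_apply_norm] using hM ⟨c, hc⟩⟩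

section aux
variable {H : Type*} [NormedAddCommGroup H] [InnerProductSpace ℂ H]

-- key parallelogram inequality
lemma cheb_key {C : Set H} (hne : C.Nonempty) (hconv : Convex ℝ C)
    {M : ℝ} (hM : ∀ c ∈ C, ‖c‖ ≤ M)
    {x y : H} (hx : x ∈ C) (hy : y ∈ C) :
    ‖x - y‖ ^ 2 + 4 * (sInf ((fun z => sSup ((fun c => ‖z - c‖) '' C)) '' C)) ^ 2 ≤
      2 * (sSup ((fun c => ‖x - c‖) '' C)) ^ 2 + 2 * (sSup ((fun c => ‖y - c‖) '' C)) ^ 2 := by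
  set f : H → ℝ := fun z => sSup ((fun c => ‖z - c‖) '' C) with hf
  set r : ℝ := sInf (f '' C) with hr
  have hbdd : ∀ z : H, BddAbove ((fun c => ‖z - c‖) '' C) := by
    intro z
    refine ⟨‖z‖ + M, ?_⟩
    rintro - ⟨c, hc, rfl⟩
    calc ‖z - c‖ ≤ ‖z‖ + ‖c‖ := norm_sub_le _ _
    _ ≤ ‖z‖ + M := by linarith [hM c hc]
  have hle : ∀ z : H, ∀ c ∈ C, ‖z - c‖ ≤ f z := fun z c hc => le_csSup (hbdd z) ⟨c, hc, rfl⟩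
  have hsup_le : ∀ z B, (∀ c ∈ C, ‖z - c‖ ≤ B) → f z ≤ B := by
    intro z B h
    exact csSup_le (hne.image _) (by rintro - ⟨c, hc, rfl⟩; exact h c hc)
  have hf0 : ∀ z, 0 ≤ f z := fun z =>
    le_trans (norm_nonneg _) (hle z hne.choose hne.choose_spec)
  have hrbdd : BddBelow (f '' C) := ⟨0, by rintro - ⟨c, hc, rfl⟩; exact hf0 c⟩
  have hrle : ∀ z ∈ C, r ≤ f z := fun z hz => csInf_le hrbdd ⟨z, hz, rfl⟩
  have hr0 : 0 ≤ r := le_csInf (hne.image f) (by rintro - ⟨c, hc, rfl⟩; exact hf0 c)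
  -- midpoint
  set m : H := (2⁻¹ : ℝ) • x + (2⁻¹ : ℝ) • y with hm
  have hmC : m ∈ C := hconv hx hy (by norm_num) (by norm_num) (by norm_num)
  have h1 : ∀ c ∈ C, 4 * ‖m - c‖ ^ 2 + ‖x - y‖ ^ 2 = 2 * ‖x - c‖ ^ 2 + 2 * ‖y - c‖ ^ 2 := by
    intro c hc
    have hpar := parallelogram_law_with_norm ℂ (x - c) (y - c)
    have h2 : x - c + (y - c) = (2 : ℝ) • (m - c) := by
      rw [hm]; module
    have h3 : ‖(2 : ℝ) • (m - c)‖ = 2 * ‖m - c‖ := by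
      rw [norm_smul]; simp
    have h4 : x - c - (y - c) = x - y := by abel
    rw [h2, h4, h3] at hpar
    nlinarith [hpar]
  -- bound f m
  have hQ0 : 0 ≤ 2 * (f x) ^ 2 + 2 * (f y) ^ 2 - ‖x - y‖ ^ 2 := by
    obtain ⟨c, hc⟩ := hne
    nlinarith [h1 c hc, norm_nonneg (m - c), hle x c hc, hle y c hc, norm_nonneg (x - c),
      norm_nonneg (y - c)]
  have hfm : 4 * (f m) ^ 2 ≤ 2 * (f x) ^ 2 + 2 * (f y) ^ 2 - ‖x - y‖ ^ 2 := by
    have hh : f m ≤ Real.sqrt ((2 * (f x) ^ 2 + 2 * (f y) ^ 2 - ‖x - y‖ ^ 2) / 4) := by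
      refine hsup_le m _ fun c hc => ?_
      rw [← Real.sqrt_sq (norm_nonneg (m - c))]
      apply Real.sqrt_le_sqrt
      nlinarith [h1 c hc, hle x c hc, hle y c hc, norm_nonneg (x - c), norm_nonneg (y - c)]
    have := Real.sq_sqrt (by linarith : (0:ℝ) ≤ (2 * (f x) ^ 2 + 2 * (f y) ^ 2 - ‖x - y‖ ^ 2) / 4)
    nlinarith [hf0 m, Real.sqrt_nonneg ((2 * (f x) ^ 2 + 2 * (f y) ^ 2 - ‖x - y‖ ^ 2) / 4)]
  have := hrle m hmC
  nlinarith [hf0 m]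

end aux

/-- Ryll-Nardzewski consequence: If `C` is a nonempty, convex, weakly
compact subset of a Hilbert space `H` that is invariant under the unitaries `π y`,
`y ∈ S`, for a unitary representation `π` of `G` and a subgroup `S ≤ G`, then `C`
contains a vector fixed by `π y` for every `y ∈ S`. -/
theorem stmt_9 {G H : Type*} [Group G]
    [NormedAddCommGroup H] [InnerProductSpace ℂ H] [CompleteSpace H]
    (π : G →* (H ≃ₗᵢ[ℂ] H)) (S : Subgroup G)
    (C : Set H) (hne : C.Nonempty) (hconv : Convex ℝ C)
    (hwc : IsCompact (toWeakSpace ℂ H '' C))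
    (hinv : ∀ y ∈ S, ∀ η ∈ C, π y η ∈ C) :
    ∃ η ∈ C, ∀ y ∈ S, π y η = η := by
  classical
  have hclosed : IsClosed C := closed_of_wc hwc
  obtain ⟨M, hM⟩ := bounded_of_wc hwc
  set f : H → ℝ := fun z => sSup ((fun c => ‖z - c‖) '' C) with hf
  set r : ℝ := sInf (f '' C) with hr
  have hbdd : ∀ z : H, BddAbove ((fun c => ‖z - c‖) '' C) := by
    intro z
    refine ⟨‖z‖ + M, ?_⟩
    rintro - ⟨c, hc, rfl⟩
    calc ‖z - c‖ ≤ ‖z‖ + ‖c‖ := norm_sub_le _ _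
    _ ≤ ‖z‖ + M := by linarith [hM c hc]
  have hle : ∀ z : H, ∀ c ∈ C, ‖z - c‖ ≤ f z := fun z c hc => le_csSup (hbdd z) ⟨c, hc, rfl⟩
  have hsup_le : ∀ z B, (∀ c ∈ C, ‖z - c‖ ≤ B) → f z ≤ B := by
    intro z B h
    exact csSup_le (hne.image _) (by rintro - ⟨c, hc, rfl⟩; exact h c hc)
  have hf0 : ∀ z, 0 ≤ f z := fun z =>
    le_trans (norm_nonneg _) (hle z hne.choose hne.choose_spec)
  have hrbdd : BddBelow (f '' C) := ⟨0, by rintro - ⟨c, hc, rfl⟩; exact hf0 c⟩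
  have hrle : ∀ z ∈ C, r ≤ f z := fun z hz => csInf_le hrbdd ⟨z, hz, rfl⟩
  have hr0 : 0 ≤ r := le_csInf (hne.image f) (by rintro - ⟨c, hc, rfl⟩; exact hf0 c)
  have key : ∀ x ∈ C, ∀ y ∈ C,
      ‖x - y‖ ^ 2 + 4 * r ^ 2 ≤ 2 * (f x) ^ 2 + 2 * (f y) ^ 2 :=
    fun x hx y hy => cheb_key hne hconv hM hx hy
  -- minimizing sequence
  have hseq : ∀ n : ℕ, ∃ z ∈ C, f z < r + 1 / (n + 1) := by
    intro n
    have hlt : r < r + 1 / (n + 1) := by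
      have : (0:ℝ) < 1 / (n + 1) := by positivity
      linarith
    obtain ⟨a, ⟨z, hz, rfl⟩, ha⟩ := exists_lt_of_csInf_lt (hne.image f) hlt
    exact ⟨z, hz, ha⟩
  choose x hxC hxf using hseq
  -- Cauchy
  have hcauchy : CauchySeq x := by
    rw [Metric.cauchySeq_iff']
    intro ε hε
    obtain ⟨N, hN⟩ := exists_nat_one_div_lt (show (0:ℝ) < ε ^ 2 / (8 * r + 4 + ε ^ 2) by positivity)
    refine ⟨N, fun n hn => ?_⟩
    have hδ : (1 : ℝ) / (n + 1) ≤ 1 / (N + 1) := by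
      apply one_div_le_one_div_of_le (by positivity)
      exact_mod_cast by omega
    set δ : ℝ := 1 / (N + 1) with hδdef
    have hδpos : 0 < δ := by positivity
    have hδsmall : δ < ε ^ 2 / (8 * r + 4 + ε ^ 2) := hN
    have h1 : f (x n) < r + δ := lt_of_lt_of_le (hxf n) (by linarith)
    have h2 : f (x N) < r + δ := hxf N
    have hk := key (x n) (hxC n) (x N) (hxC N)
    have hd2 : ‖x n - x N‖ ^ 2 < ε ^ 2 := by
      have hfn0 := hf0 (x n); have hfN0 := hf0 (x N)
      have hδ1 : δ * (8 * r + 4 + ε ^ 2) < ε ^ 2 :=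
        (lt_div_iff₀ (by positivity)).1 hδsmall
      have hδle1 : δ ≤ 1 := by
        rw [hδdef]; rw [div_le_one (by positivity)]; linarith [Nat.cast_nonneg (α := ℝ) N]
      nlinarith [sq_nonneg ε, sq_nonneg δ]
    rw [dist_eq_norm]
    nlinarith [norm_nonneg (x n - x N)]
  obtain ⟨η, hη⟩ := cauchySeq_tendsto_of_complete hcauchy
  have hηC : η ∈ C := hclosed.mem_of_tendsto hη (Filter.Eventually.of_forall hxC)
  -- f is 1-Lipschitz
  have hlip : ∀ a b : H, f a ≤ f b + ‖a - b‖ := by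
    intro a b
    refine hsup_le a _ fun c hc => ?_
    calc ‖a - c‖ = ‖(a - b) + (b - c)‖ := by abel_nf
    _ ≤ ‖a - b‖ + ‖b - c‖ := norm_add_le _ _
    _ ≤ ‖a - b‖ + f b := by linarith [hle b c hc]
    _ = f b + ‖a - b‖ := by ring
  have hfη : f η = r := by
    refine le_antisymm ?_ (hrle η hηC)
    have hten : Filter.Tendsto (fun (n : ℕ) => r + 1 / ((n : ℝ) + 1) + ‖η - x n‖)
        Filter.atTop (nhds r) := by
      have h1 : Filter.Tendsto (fun n : ℕ => 1 / ((n : ℝ) + 1)) Filter.atTop (nhds 0) :=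
        tendsto_one_div_add_atTop_nhds_zero_nat
      have h2 : Filter.Tendsto (fun n => ‖η - x n‖) Filter.atTop (nhds 0) := by
        have := hη.sub_const η
        have h3 : Filter.Tendsto (fun n => x n - η) Filter.atTop (nhds 0) := by
          simpa using this
        have := h3.norm
        simpa [norm_sub_rev] using this
      have := ((tendsto_const_nhds (x := r)).add h1).add h2
      simpa using this
    refine ge_of_tendsto hten (Filter.Eventually.of_forall fun (n : ℕ) => ?_)
    calc f η ≤ f (x n) + ‖η - x n‖ := hlip η (x n)
    _ ≤ r + 1 / ((n : ℝ) + 1) + ‖η - x n‖ := by linarith [hxf n]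
  -- uniqueness of minimizer and invariance
  refine ⟨η, hηC, fun y hy => ?_⟩
  have hyinv : π y η ∈ C := hinv y hy η hηC
  -- f (π y η) = r
  have himg : (fun c => ‖π y η - c‖) '' C = (fun c => ‖η - c‖) '' C := by
    ext t
    constructor
    · rintro ⟨c, hc, rfl⟩
      refine ⟨π y⁻¹ c, hinv y⁻¹ (S.inv_mem hy) c hc, ?_⟩
      have hcomp : (π y) ((π y⁻¹) c) = c := by
        have h1 : π y * π y⁻¹ = 1 := by rw [← map_mul, mul_inv_cancel, map_one]
        have h := congrArg (fun e : H ≃ₗᵢ[ℂ] H => e c) h1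
        simpa using h
      show ‖η - π y⁻¹ c‖ = ‖π y η - c‖
      rw [← (π y).norm_map (η - π y⁻¹ c), map_sub, hcomp]
    · rintro ⟨c, hc, rfl⟩
      refine ⟨π y c, hinv y hy c hc, ?_⟩
      show ‖π y η - π y c‖ = ‖η - c‖
      rw [← map_sub (π y), (π y).norm_map]
  have hfπ : f (π y η) = r := by show sSup ((fun c => ‖π y η - c‖) '' C) = r; rw [himg]; exact hfη
  have hk := key (π y η) hyinv η hηC
  rw [hfπ, hfη] at hk
  have : ‖π y η - η‖ = 0 := by nlinarith [norm_nonneg (π y η - η), sq_nonneg (‖π y η - η‖)]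
  rw [norm_sub_eq_zero_iff] at this
  exact this
end
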